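/- Let A be a finite central arrangement of complexified hyperplanes and C a chamber of A. Then the subposet S_C := S(A)_{≤ [P, C]} of the Salvetti poset, where P = ∩A is the minimal face, is isomorphic to the opposite of the face poset F(A): explicitly, the map F ↦ [F, C_F] is an order-reversing bijection from F(A) onto S_C. -/

import Mathlib

/-! If `x` realizes the face `F` and `y` realizes the face `K`, then for small `ε > 0` the point
`x + ε • y` realizes `K_F`: where `x` is off a hyperplane its sign wins, on the hyperplane the
sign of `y` does. So `C_F` is again a chamber, and the rest is sign-vector bookkeeping:
`[F', K'] ≤ [P, C]` says exactly `K' = C_{F'}`, and `F₁ ≤ F₂` gives `(C_{F₁})_{F₂} = C_{F₂}`. -/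

open Filter Topology

def evalForm {d : ℕ} {ι : Type} (a : ι → Fin d → ℝ) (i : ι) (x : Fin d → ℝ) : ℝ :=
  ∑ k, a i k * x k

def IsFace {d : ℕ} {ι : Type} (a : ι → Fin d → ℝ) (σ : ι → SignType) : Prop :=
  ∃ x : Fin d → ℝ, ∀ i, SignType.sign (evalForm a i x) = σ i

def IsChamber {d : ℕ} {ι : Type} (a : ι → Fin d → ℝ) (σ : ι → SignType) : Prop :=
  IsFace a σ ∧ ∀ i, σ i ≠ 0

def faceLE {ι : Type} (σ τ : ι → SignType) : Prop :=
  ∀ i, σ i = 0 ∨ σ i = τ i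

/-- Composition `K_F` of sign vectors (`K` where `F` vanishes, `F` elsewhere). -/
def faceComp {ι : Type} (K F : ι → SignType) : ι → SignType :=
  fun i => if F i = 0 then K i else F i

/-- The order of the Salvetti poset: `(F', K') ≤ (F, K)` iff `F ≤ F'` and `K_{F'} = K'`. -/
def salLE {ι : Type} (x y : (ι → SignType) × (ι → SignType)) : Prop :=
  faceLE y.1 x.1 ∧ faceComp y.2 x.1 = x.2

lemma eventually_sign_add_mul (X Y : ℝ) :
    ∀ᶠ ε in 𝓝[>] (0 : ℝ),
      SignType.sign (X + ε * Y) = if X = 0 then SignType.sign Y else SignType.sign X := by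
  by_cases hX : X = 0
  · filter_upwards [self_mem_nhdsWithin] with ε (hε : 0 < ε)
    simp [hX, sign_mul, sign_pos hε]
  · have hlim : Tendsto (fun ε : ℝ => X + ε * Y) (𝓝 0) (𝓝 X) :=
      Continuous.tendsto' (by fun_prop) 0 X (by simp)
    have hsign := (continuousAt_sign_of_ne_zero hX).tendsto.comp hlim
    rw [nhds_discrete SignType, tendsto_pure] at hsign
    rw [if_neg hX]
    exact nhdsWithin_le_nhds hsign

lemma evalForm_add_smul {d : ℕ} {ι : Type} (a : ι → Fin d → ℝ) (i : ι)
    (x y : Fin d → ℝ) (ε : ℝ) :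
    evalForm a i (x + ε • y) = evalForm a i x + ε * evalForm a i y := by
  simp only [evalForm, Pi.add_apply, Pi.smul_apply, smul_eq_mul, mul_add, Finset.sum_add_distrib,
    Finset.mul_sum, mul_left_comm]

section FaceComp

variable {d : ℕ} {ι : Type} {a : ι → Fin d → ℝ} {K F F₁ F₂ : ι → SignType}

theorem IsFace.faceComp [Finite ι] (hK : IsFace a K) (hF : IsFace a F) :
    IsFace a (faceComp K F) := by
  obtain ⟨x, hx⟩ := hF
  obtain ⟨y, hy⟩ := hK
  obtain ⟨ε, hε⟩ := (eventually_all.mpr fun i =>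
    eventually_sign_add_mul (evalForm a i x) (evalForm a i y)).exists
  refine ⟨x + ε • y, fun i => ?_⟩
  rw [evalForm_add_smul, hε i, _root_.faceComp, ← hx i, ← hy i]
  simp only [sign_eq_zero_iff]

theorem IsChamber.faceComp [Finite ι] (hK : IsChamber a K) (hF : IsFace a F) :
    IsChamber a (faceComp K F) := by
  refine ⟨hK.1.faceComp hF, fun i => ?_⟩
  unfold _root_.faceComp
  split_ifs with h
  exacts [hK.2 i, h]

theorem faceLE_zero (σ : ι → SignType) : faceLE (fun _ => 0) σ :=
  fun _ => Or.inl rfl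

theorem faceLE_faceComp (K F : ι → SignType) : faceLE F (faceComp K F) := fun i => by
  by_cases h : F i = 0 <;> simp [faceComp, h]

theorem faceComp_faceComp_of_faceLE (h : faceLE F₁ F₂) :
    faceComp (faceComp K F₁) F₂ = faceComp K F₂ := funext fun i => by
  rcases h i with h1 | h1 <;> by_cases h2 : F₂ i = 0 <;> simp [faceComp, h1, h2]

theorem salLE_faceComp_iff :
    salLE (F₂, faceComp K F₂) (F₁, faceComp K F₁) ↔ faceLE F₁ F₂ :=
  ⟨And.left, fun h => ⟨h, faceComp_faceComp_of_faceLE h⟩⟩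

end FaceComp

theorem salvetti_cell_faces_general {d : ℕ} {ι : Type} [Fintype ι]
    (a : ι → Fin d → ℝ)
    (C : ι → SignType) (hC : IsChamber a C) :
    -- the map is well defined, landing in the Salvetti poset below `[P, C]`
    (∀ F, IsFace a F →
      IsChamber a (faceComp C F) ∧ faceLE F (faceComp C F) ∧
        salLE (F, faceComp C F) (fun _ => 0, C)) ∧
    -- injectivity
    (∀ F₁ F₂, IsFace a F₁ → IsFace a F₂ →
      (F₁, faceComp C F₁) = (F₂, faceComp C F₂) → F₁ = F₂) ∧
    -- surjectivity onto `S_C`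
    (∀ F' K', IsFace a F' → IsChamber a K' → faceLE F' K' →
      salLE (F', K') (fun _ => 0, C) → K' = faceComp C F') ∧
    -- order-reversing in both directions
    (∀ F₁ F₂, IsFace a F₁ → IsFace a F₂ →
      (faceLE F₁ F₂ ↔ salLE (F₂, faceComp C F₂) (F₁, faceComp C F₁))) := by
  refine ⟨fun F hF => ⟨hC.faceComp hF, faceLE_faceComp C F, faceLE_zero F, rfl⟩, ?_, ?_, ?_⟩
  · exact fun F₁ F₂ _ _ h => congrArg Prod.fst h
  · exact fun F' K' _ _ _ h => h.2.symm
  · exact fun F₁ F₂ _ _ => salLE_faceComp_iff.symm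

/-- Let `A` be a finite central complexified arrangement with minimal
face `P = ∩A` (sign vector `0`) and let `C` be a chamber.  The map `F ↦ [F, C_F]` is a
bijection from the face poset of `A` onto `S_C = S(A)_{≤ [P,C]}`, and it reverses order:
`F₁ ≤ F₂` iff `[F₂, C_{F₂}] ≤ [F₁, C_{F₁}]` in the Salvetti poset. -/
theorem salvetti_cell_faces {d : ℕ} {ι : Type} [Fintype ι]
    (a : ι → Fin d → ℝ) (ha : ∀ i, a i ≠ 0)
    (C : ι → SignType) (hC : IsChamber a C) :
    -- the map is well defined, landing in the Salvetti poset below `[P, C]`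
    (∀ F, IsFace a F →
      IsChamber a (faceComp C F) ∧ faceLE F (faceComp C F) ∧
        salLE (F, faceComp C F) (fun _ => 0, C)) ∧
    -- injectivity
    (∀ F₁ F₂, IsFace a F₁ → IsFace a F₂ →
      (F₁, faceComp C F₁) = (F₂, faceComp C F₂) → F₁ = F₂) ∧
    -- surjectivity onto `S_C`
    (∀ F' K', IsFace a F' → IsChamber a K' → faceLE F' K' →
      salLE (F', K') (fun _ => 0, C) → K' = faceComp C F') ∧
    -- order-reversing in both directions
    (∀ F₁ F₂, IsFace a F₁ → IsFace a F₂ →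
      (faceLE F₁ F₂ ↔ salLE (F₂, faceComp C F₂) (F₁, faceComp C F₁))) :=
  salvetti_cell_faces_general a C hC
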